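/- Let ts : {1,...,n} → ℝ be slowly monotone with respect to M, and let tsm(v) = ⌊ts(v)⌋ mod M. Then for u ≤ v: dtsm+(u,v) = M if and only if the pair (u,v) is tsm-big, i.e., there exist w1, w2 with u ≤ w1 < w2 ≤ v and dtsm(u,w1) + dtsm(w1,w2) ≥ M. -/
import Mathlib


open Finset

/-- A weighted constraint edge: `ts tgt - ts src ◁ wt` where ◁ is `<` if `strict` else `≤`. -/
structure WEdge where
  src : ℕ
  strict : Bool
  wt : ℤ
  tgt : ℕ
deriving DecidableEq

/-- `ts` satisfies the constraint of edge `e`. -/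
def satEdge (ts : ℕ → ℝ) (e : WEdge) : Prop :=
  if e.strict then ts e.tgt - ts e.src < (e.wt : ℝ) else ts e.tgt - ts e.src ≤ (e.wt : ℝ)

/-- `ts` realizes the linear weighted graph on vertices `{1,…,n}` with edge set `E`:
monotone w.r.t. the linear order and all difference constraints hold. -/
def Realizes (n : ℕ) (E : Finset WEdge) (ts : ℕ → ℝ) : Prop :=
  (∀ u v : ℕ, 1 ≤ u → u ≤ v → v ≤ n → ts u ≤ ts v) ∧ ∀ e ∈ E, satEdge ts e

/-- Integer parts of consecutive time-stamps differ by at least 0 and at most `M - 1`. -/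
def SlowlyMonotone (M : ℤ) (n : ℕ) (ts : ℕ → ℝ) : Prop :=
  ∀ i : ℕ, 1 ≤ i → i < n → 0 ≤ ⌊ts (i + 1)⌋ - ⌊ts i⌋ ∧ ⌊ts (i + 1)⌋ - ⌊ts i⌋ ≤ M - 1

/-- All edges of the graph have endpoints in `{1,…,n}`. -/
def InGraph (n : ℕ) (E : Finset WEdge) : Prop :=
  ∀ e ∈ E, 1 ≤ e.src ∧ e.src ≤ n ∧ 1 ≤ e.tgt ∧ e.tgt ≤ n

/-- `M` weight-bounded: all weights have absolute value at most `M - 1`. -/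
def WtBounded (M : ℤ) (E : Finset WEdge) : Prop := ∀ e ∈ E, |e.wt| ≤ M - 1

/-- `dtsm(u,v) = (tsm v - tsm u) mod M`. -/
def dtsm (M : ℤ) (tsm : ℕ → ℤ) (u v : ℕ) : ℤ := (tsm v - tsm u) % M

/-- `dtsm⁺(u,v)`, for `u ≤ v`: the cumulative sum of consecutive `dtsm`'s, capped at `M`. -/
def dtsmP (M : ℤ) (tsm : ℕ → ℤ) (u v : ℕ) : ℤ :=
  min M (∑ i ∈ Finset.Ico u v, dtsm M tsm i (i + 1))

/-- Antisymmetric extension of `dtsm⁺` to arbitrary pairs. -/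
def dtsmE (M : ℤ) (tsm : ℕ → ℤ) (u v : ℕ) : ℤ :=
  if u ≤ v then dtsmP M tsm u v else - dtsmP M tsm v u

/-- `(u,v)` is `tsm`-big. -/
def TsmBig (M : ℤ) (tsm : ℕ → ℤ) (u v : ℕ) : Prop :=
  ∃ w1 w2 : ℕ, u ≤ w1 ∧ w1 < w2 ∧ w2 ≤ v ∧ M ≤ dtsm M tsm u w1 + dtsm M tsm w1 w2

/-- `tsm` is a time-stamping modulo `M` on vertices `{1,…,n}`. -/
def TSM (M : ℤ) (n : ℕ) (tsm : ℕ → ℤ) : Prop :=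
  ∀ v, 1 ≤ v → v ≤ n → 0 ≤ tsm v ∧ tsm v < M

/-- `tsm` weakly satisfies the graph (forward/backward conditions). -/
def WeaklySat (M : ℤ) (E : Finset WEdge) (tsm : ℕ → ℤ) : Prop :=
  ∀ e ∈ E,
    (e.src ≤ e.tgt → ¬ TsmBig M tsm e.src e.tgt ∧ dtsm M tsm e.src e.tgt ≤ e.wt) ∧
    (e.tgt < e.src → TsmBig M tsm e.tgt e.src ∨ - e.wt ≤ dtsm M tsm e.tgt e.src)

/-- `(u,v) ∈ geqFr`: fractional part of `ts u` must be ≥ that of `ts v`. -/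
def geqFr (M : ℤ) (tsm : ℕ → ℤ) (E : Finset WEdge) (u v : ℕ) : Prop :=
  (∃ e ∈ E, e.src = u ∧ e.tgt = v ∧ dtsmE M tsm u v = e.wt) ∨
  (v + 1 = u ∧ dtsmE M tsm u v = 0)

/-- `(u,v) ∈ gtFr`: fractional part of `ts u` must be > that of `ts v`. -/
def gtFr (M : ℤ) (tsm : ℕ → ℤ) (E : Finset WEdge) (u v : ℕ) : Prop :=
  ∃ e ∈ E, e.strict = true ∧ e.src = u ∧ e.tgt = v ∧ dtsmE M tsm u v = e.wt

open Classical in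
/-- Number of `gtFr` edges used by the path `p 0, p 1, …, p k`. -/
noncomputable def gtCount (M : ℤ) (tsm : ℕ → ℤ) (E : Finset WEdge) (k : ℕ) (p : ℕ → ℕ) : ℕ :=
  ((Finset.range k).filter (fun i => gtFr M tsm E (p i) (p (i + 1)))).card

theorem dtsmP_eq_top_iff_tsmBig (M : ℤ) (hM : 1 ≤ M) (n : ℕ) (ts : ℕ → ℝ)
    (hsm : SlowlyMonotone M n ts) (tsm : ℕ → ℤ) (htsm : ∀ v, tsm v = ⌊ts v⌋ % M)
    (u v : ℕ) (hu : 1 ≤ u) (huv : u ≤ v) (hv : v ≤ n) :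
    dtsmP M tsm u v = M ↔ TsmBig M tsm u v := by
  have hd : ∀ a b : ℕ, dtsm M tsm a b = (⌊ts b⌋ - ⌊ts a⌋) % M := by
    intro a b
    simp only [dtsm, htsm]
    rw [← Int.sub_emod]
  have hstep : ∀ i : ℕ, 1 ≤ i → i < n → dtsm M tsm i (i + 1) = ⌊ts (i + 1)⌋ - ⌊ts i⌋ := by
    intro i h1 h2
    have hb := hsm i h1 h2
    rw [hd, Int.emod_eq_of_lt hb.1 (by omega)]
  have hsum : ∀ w1 w2 : ℕ, u ≤ w1 → w1 ≤ w2 → w2 ≤ v →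
      (∑ i ∈ Finset.Ico w1 w2, dtsm M tsm i (i + 1)) = ⌊ts w2⌋ - ⌊ts w1⌋ := by
    intro w1 w2 hw1 hw hw2
    induction w2, hw using Nat.le_induction with
    | base => simp
    | succ w hw ih =>
      rw [Finset.sum_Ico_succ_top hw, ih (by omega), hstep w (by omega) (by omega)]
      ring
  have hnonneg : ∀ w1 w2 : ℕ, u ≤ w1 → w1 ≤ w2 → w2 ≤ v → 0 ≤ ⌊ts w2⌋ - ⌊ts w1⌋ := by
    intro w1 w2 hw1 hw hw2
    rw [← hsum w1 w2 hw1 hw hw2]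
    exact Finset.sum_nonneg fun i _ => Int.emod_nonneg _ (by omega)
  have hmodle : ∀ x : ℤ, 0 ≤ x → x % M ≤ x := by
    intro x hx
    have h1 := Int.emod_add_mul_ediv x M
    have h2 : 0 ≤ M * (x / M) := mul_nonneg (by omega) (Int.ediv_nonneg hx (by omega))
    omega
  rw [dtsmP, hsum u v le_rfl huv le_rfl]
  constructor
  · intro h
    have hMS : M ≤ ⌊ts v⌋ - ⌊ts u⌋ := by
      rcases le_total M (⌊ts v⌋ - ⌊ts u⌋) with h' | h'
      · exact h'
      · rw [min_eq_right h'] at h; omega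
    have huv' : u < v := by
      rcases eq_or_lt_of_le huv with rfl | h'
      · simp at hMS; omega
      · exact h'
    have hex : ∃ w, u < w ∧ w ≤ v ∧ M ≤ ⌊ts w⌋ - ⌊ts u⌋ := ⟨v, huv', le_rfl, hMS⟩
    classical
    obtain ⟨w2, ⟨hw2u, hw2v, hw2M⟩, hmin⟩ :
        ∃ w, (u < w ∧ w ≤ v ∧ M ≤ ⌊ts w⌋ - ⌊ts u⌋) ∧
          ∀ m < w, ¬(u < m ∧ m ≤ v ∧ M ≤ ⌊ts m⌋ - ⌊ts u⌋) :=
      ⟨Nat.find hex, Nat.find_spec hex, fun m hm => Nat.find_min hex hm⟩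
    set w1 := w2 - 1 with hw1def
    have hw12 : w1 < w2 := by omega
    have hw1u : u ≤ w1 := by omega
    have hS1 : ⌊ts w1⌋ - ⌊ts u⌋ < M := by
      rcases eq_or_lt_of_le hw1u with heq | hlt
      · rw [← heq]; simp; omega
      · have := hmin w1 hw12
        push_neg at this
        exact this hlt (by omega)
    have hS1nn : 0 ≤ ⌊ts w1⌋ - ⌊ts u⌋ := hnonneg u w1 le_rfl hw1u (by omega)
    refine ⟨w1, w2, hw1u, hw12, hw2v, ?_⟩
    have h1 : dtsm M tsm u w1 = ⌊ts w1⌋ - ⌊ts u⌋ := by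
      rw [hd, Int.emod_eq_of_lt hS1nn hS1]
    have hw2eq : w2 = w1 + 1 := by omega
    have h2 : dtsm M tsm w1 w2 = ⌊ts w2⌋ - ⌊ts w1⌋ := by
      rw [hw2eq]; exact hstep w1 (by omega) (by omega)
    rw [h1, h2]; omega
  · rintro ⟨w1, w2, hw1, hw12, hw2, hbig⟩
    have h1 : dtsm M tsm u w1 ≤ ⌊ts w1⌋ - ⌊ts u⌋ := by
      rw [hd]; exact hmodle _ (hnonneg u w1 le_rfl hw1 (by omega))
    have h2 : dtsm M tsm w1 w2 ≤ ⌊ts w2⌋ - ⌊ts w1⌋ := by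
      rw [hd]; exact hmodle _ (hnonneg w1 w2 hw1 (by omega) hw2)
    have h3 : 0 ≤ ⌊ts v⌋ - ⌊ts w2⌋ := hnonneg w2 v (by omega) hw2 le_rfl
    omega
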